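/- Let γ > 1 and let f^num be a continuous, consistent numerical two-point flux for the compressible Euler equations that is EC and PEP and whose density component f^num_ρ(u₋, u₊) does not depend on the pressures p₋, p₊. Then for every pair of states u₋ = (ρ₋, v, p₋), u₊ = (ρ₊, v, p₊) with common velocity v, with ρ₋ ≠ ρ₊ and ρ₋/p₋ ≠ ρ₊/p₊, one has f^num_ρ = ρ^log v and f^num_{ρe} = v f^num_{ρv} − (1/2) ρ^log v³ + (1/(γ−1)) ( ρ^log / (ρ/p)^log ) v, where (ρ/p)^log = ⟦ρ/p⟧/⟦log(ρ/p)⟧. -/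

import Mathlib

noncomputable section
open Real

/-- A state `u = (ρ, v, p)` of the 1D compressible Euler equations:
density `u.1`, velocity `u.2.1`, pressure `u.2.2`. -/
abbrev EulerState := ℝ × ℝ × ℝ

/-- Entropy variables `w(u)` for the entropy `U = -ρ s/(γ-1)`, `s = log(p/ρ^γ)`. -/
def entVar (γ : ℝ) (u : EulerState) : EulerState :=
  (γ/(γ-1) - Real.log (u.2.2 / u.1 ^ γ)/(γ-1) - u.1 * u.2.1^2/(2*u.2.2),
   u.1*u.2.1/u.2.2,
   -(u.1/u.2.2))

/-- Euclidean dot product on `ℝ × ℝ × ℝ`. -/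
def dot3 (a b : EulerState) : ℝ := a.1*b.1 + a.2.1*b.2.1 + a.2.2*b.2.2

/-- Logarithmic mean `(a₊ - a₋)/(log a₊ - log a₋)`. -/
def logMean (am ap : ℝ) : ℝ := (ap - am)/(Real.log ap - Real.log am)

/-- Entropy conservation (EC) in the sense of Tadmor: `⟦w⟧ ⬝ f^num = ⟦ψ⟧`, `ψ = ρ v`. -/
def IsEC (γ : ℝ) (f : EulerState → EulerState → EulerState) : Prop :=
  ∀ um up : EulerState, 0 < um.1 → 0 < um.2.2 → 0 < up.1 → 0 < up.2.2 →
    dot3 (entVar γ up - entVar γ um) (f um up) = up.1 * up.2.1 - um.1 * um.2.1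

/-- Pressure equilibrium preservation (PEP). -/
def IsPEP (f : EulerState → EulerState → EulerState) : Prop :=
  ∃ c₁ c₂ : ℝ → ℝ → ℝ, ∀ ρm ρp v p : ℝ, 0 < ρm → 0 < ρp → 0 < p →
    (f (ρm, v, p) (ρp, v, p)).2.1 = v * (f (ρm, v, p) (ρp, v, p)).1 + c₁ p v ∧
    (f (ρm, v, p) (ρp, v, p)).2.2 = (v^2/2) * (f (ρm, v, p) (ρp, v, p)).1 + c₂ p v

/-- Consistency: `f^num(u, u) = f(u)`, the Euler flux. -/
def IsConsistent (γ : ℝ) (f : EulerState → EulerState → EulerState) : Prop :=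
  ∀ ρ v p : ℝ, 0 < ρ → 0 < p →
    f (ρ, v, p) (ρ, v, p) = (ρ*v, ρ*v^2 + p, (p/(γ-1) + ρ*v^2/2 + p)*v)


/-!
Write `β = ρ/p`. In terms of `β` the entropy variables are
`w = (γ/(γ-1) + log β/(γ-1) + log ρ - β v²/2, β v, -β)`, so for two states with a common velocity
the EC identity reads
`(⟦log β⟧/(γ-1) + ⟦log ρ⟧ - v²/2 ⟦β⟧) f_ρ + v ⟦β⟧ f_{ρv} - ⟦β⟧ f_{ρe} = v ⟦ρ⟧`.
Taking `p = ρ` on both sides kills every `⟦β⟧` term and leaves `⟦log ρ⟧ f_ρ = v ⟦ρ⟧`, i.e.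
`f_ρ = ρ^log v`; since `f_ρ` ignores the pressures, this holds for all pressures. Substituting it
back and dividing by `⟦β⟧ ≠ 0` gives the energy flux.
-/

lemma log_sub_log_ne_zero {a b : ℝ} (ha : 0 < a) (hb : 0 < b) (hab : a ≠ b) :
    log b - log a ≠ 0 :=
  sub_ne_zero.mpr fun h => hab (log_injOn_pos hb ha h).symm

lemma eq_logMean_mul_of_mul_log_sub {a b x v : ℝ} (ha : 0 < a) (hb : 0 < b) (hab : a ≠ b)
    (h : x * (log b - log a) = (b - a) * v) : x = logMean a b * v := by
  rw [logMean, div_mul_eq_mul_div, eq_div_iff (log_sub_log_ne_zero ha hb hab), h]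

lemma entVar_eq {γ ρ v p : ℝ} (hγ : γ ≠ 1) (hρ : 0 < ρ) (hp : 0 < p) :
    entVar γ (ρ, v, p) =
      (γ/(γ-1) + log (ρ/p)/(γ-1) + log ρ - ρ/p * v^2/2, ρ/p * v, -(ρ/p)) := by
  have hγ' : γ - 1 ≠ 0 := sub_ne_zero.mpr hγ
  have hlog : log (p / ρ ^ γ) = -log (ρ/p) - (γ - 1) * log ρ := by
    rw [log_div hp.ne' (rpow_pos_of_pos hρ γ).ne', log_rpow hρ, log_div hρ.ne' hp.ne']
    ring
  simp only [entVar, hlog, Prod.mk.injEq]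
  refine ⟨?_, by ring, trivial⟩
  field_simp
  ring

lemma dot3_entVar_sub_of_common_velocity {γ ρm ρp v pm pp : ℝ} (hγ : γ ≠ 1)
    (hρm : 0 < ρm) (hρp : 0 < ρp) (hpm : 0 < pm) (hpp : 0 < pp) (F : EulerState) :
    dot3 (entVar γ (ρp, v, pp) - entVar γ (ρm, v, pm)) F =
      ((log (ρp/pp) - log (ρm/pm))/(γ-1) + (log ρp - log ρm)
          - v^2/2 * (ρp/pp - ρm/pm)) * F.1
        + v * (ρp/pp - ρm/pm) * F.2.1 - (ρp/pp - ρm/pm) * F.2.2 := by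
  rw [entVar_eq hγ hρp hpp, entVar_eq hγ hρm hpm]
  simp only [dot3, Prod.mk_sub_mk]
  ring

section EntropyConservative

variable {γ : ℝ} {f : EulerState → EulerState → EulerState}

lemma IsEC.density_flux_mul_log_sub (hEC : IsEC γ f) (hγ : γ ≠ 1) {ρm ρp : ℝ}
    (hρm : 0 < ρm) (hρp : 0 < ρp) (v : ℝ) :
    (f (ρm, v, ρm) (ρp, v, ρp)).1 * (log ρp - log ρm) = (ρp - ρm) * v := by
  have h := hEC (ρm, v, ρm) (ρp, v, ρp) hρm hρm hρp hρp
  rw [dot3_entVar_sub_of_common_velocity hγ hρm hρp hρm hρp, div_self hρm.ne',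
    div_self hρp.ne'] at h
  simp only [sub_self, log_one, zero_div, mul_zero, zero_mul, zero_add, sub_zero] at h
  linear_combination h

lemma IsEC.energy_flux_eq (hEC : IsEC γ f) (hγ : γ ≠ 1) {ρm ρp v pm pp : ℝ}
    (hρm : 0 < ρm) (hρp : 0 < ρp) (hpm : 0 < pm) (hpp : 0 < pp) (hβ : ρm/pm ≠ ρp/pp)
    (hdensity : (f (ρm, v, pm) (ρp, v, pp)).1 * (log ρp - log ρm) = (ρp - ρm) * v) :
    (f (ρm, v, pm) (ρp, v, pp)).2.2 =
      v * (f (ρm, v, pm) (ρp, v, pp)).2.1 - v^2/2 * (f (ρm, v, pm) (ρp, v, pp)).1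
        + (f (ρm, v, pm) (ρp, v, pp)).1 / (γ-1) / logMean (ρm/pm) (ρp/pp) := by
  have h := hEC (ρm, v, pm) (ρp, v, pp) hρm hpm hρp hpp
  rw [dot3_entVar_sub_of_common_velocity hγ hρm hρp hpm hpp] at h
  have hγ' : γ - 1 ≠ 0 := sub_ne_zero.mpr hγ
  have hjump : ρp/pp - ρm/pm ≠ 0 := sub_ne_zero.mpr hβ.symm
  have hjump_mul_energy : (ρp/pp - ρm/pm) * (f (ρm, v, pm) (ρp, v, pp)).2.2 =
      (ρp/pp - ρm/pm) * (v * (f (ρm, v, pm) (ρp, v, pp)).2.1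
          - v^2/2 * (f (ρm, v, pm) (ρp, v, pp)).1)
        + (log (ρp/pp) - log (ρm/pm)) / (γ-1) * (f (ρm, v, pm) (ρp, v, pp)).1 := by
    linear_combination -h + hdensity
  apply mul_left_cancel₀ hjump
  rw [hjump_mul_energy, logMean]
  -- keep `⟦β⟧` opaque, otherwise `field_simp` expands it and loses `hjump`
  generalize ρp/pp - ρm/pm = J at hjump ⊢
  field_simp

end EntropyConservative

theorem ec_pep_flux_constant_velocity_general
    (γ : ℝ) (hγ : 1 < γ) (f : EulerState → EulerState → EulerState)
    (hEC : IsEC γ f)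
    (hdens : ∀ ρm ρp vm vp pm pp qm qp : ℝ,
      0 < ρm → 0 < ρp → 0 < pm → 0 < pp → 0 < qm → 0 < qp →
      (f (ρm, vm, pm) (ρp, vp, pp)).1 = (f (ρm, vm, qm) (ρp, vp, qp)).1) :
    ∀ ρm ρp v pm pp : ℝ, 0 < ρm → 0 < ρp → 0 < pm → 0 < pp →
      ρm ≠ ρp → ρm/pm ≠ ρp/pp →
      (f (ρm, v, pm) (ρp, v, pp)).1 = logMean ρm ρp * v ∧
      (f (ρm, v, pm) (ρp, v, pp)).2.2
        = v * (f (ρm, v, pm) (ρp, v, pp)).2.1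
          - (1/2) * logMean ρm ρp * v^3
          + (1/(γ-1)) * (logMean ρm ρp / logMean (ρm/pm) (ρp/pp)) * v := by
  intro ρm ρp v pm pp hρm hρp hpm hpp hρ hβ
  have hdensity : (f (ρm, v, pm) (ρp, v, pp)).1 * (log ρp - log ρm) = (ρp - ρm) * v := by
    rw [hdens ρm ρp v v pm pp ρm ρp hρm hρp hpm hpp hρm hρp]
    exact hEC.density_flux_mul_log_sub hγ.ne' hρm hρp v
  have hmass := eq_logMean_mul_of_mul_log_sub hρm hρp hρ hdensity
  refine ⟨hmass, ?_⟩
  rw [hEC.energy_flux_eq hγ.ne' hρm hρp hpm hpp hβ hdensity, hmass]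
  ring

/-- any continuous, consistent, EC and PEP two-point flux whose
density component does not depend on the pressures satisfies, for all pairs of
states with common velocity `v`, `ρ₋ ≠ ρ₊` and `ρ₋/p₋ ≠ ρ₊/p₊`,
`f^num_ρ = ρ^log v` and
`f^num_{ρe} = v f^num_{ρv} - (1/2) ρ^log v³ + (1/(γ-1)) (ρ^log/(ρ/p)^log) v`. -/
theorem ec_pep_flux_constant_velocity
    (γ : ℝ) (hγ : 1 < γ) (f : EulerState → EulerState → EulerState)
    (hcont : ContinuousOn (fun q : EulerState × EulerState => f q.1 q.2)
      {q : EulerState × EulerState | 0 < q.1.1 ∧ 0 < q.1.2.2 ∧ 0 < q.2.1 ∧ 0 < q.2.2.2})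
    (hcons : IsConsistent γ f)
    (hEC : IsEC γ f) (hPEP : IsPEP f)
    (hdens : ∀ ρm ρp vm vp pm pp qm qp : ℝ,
      0 < ρm → 0 < ρp → 0 < pm → 0 < pp → 0 < qm → 0 < qp →
      (f (ρm, vm, pm) (ρp, vp, pp)).1 = (f (ρm, vm, qm) (ρp, vp, qp)).1) :
    ∀ ρm ρp v pm pp : ℝ, 0 < ρm → 0 < ρp → 0 < pm → 0 < pp →
      ρm ≠ ρp → ρm/pm ≠ ρp/pp →
      (f (ρm, v, pm) (ρp, v, pp)).1 = logMean ρm ρp * v ∧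
      (f (ρm, v, pm) (ρp, v, pp)).2.2
        = v * (f (ρm, v, pm) (ρp, v, pp)).2.1
          - (1/2) * logMean ρm ρp * v^3
          + (1/(γ-1)) * (logMean ρm ρp / logMean (ρm/pm) (ρp/pp)) * v :=
  ec_pep_flux_constant_velocity_general γ hγ f hEC hdens
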